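/- If the perimeter word of a connected shape S (with no holes) contains a subword of the form d_i d_{i−1}^+ d_{i−2} (indices mod 4 over the cyclic direction order up, right, down, left), then S is not orthogonal convex: there exist two cells of S in a common row or column with an empty cell strictly between them. -/

import Mathlib

def Adjacent (p q : ℤ × ℤ) : Prop :=
  (p.1 = q.1 ∧ (p.2 = q.2 + 1 ∨ q.2 = p.2 + 1)) ∨
  (p.2 = q.2 ∧ (p.1 = q.1 + 1 ∨ q.1 = p.1 + 1))

def ShapeConnected (S : Finset (ℤ × ℤ)) : Prop :=
  ∀ p ∈ S, ∀ q ∈ S,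
    Relation.ReflTransGen (fun a b => a ∈ S ∧ b ∈ S ∧ Adjacent a b) p q

/-- `c` is a hole of `S`: it is empty but every infinite axis-parallel lattice path
starting at `c` meets `S`. -/
def IsHole (S : Finset (ℤ × ℤ)) (c : ℤ × ℤ) : Prop :=
  c ∉ S ∧ ∀ f : ℕ → ℤ × ℤ, f 0 = c → (∀ n, Adjacent (f n) (f (n + 1))) →
    Function.Injective f → ∃ n, f n ∈ S

inductive Dir | up | right | down | left
deriving DecidableEq

/-- d_{i-1} in the cyclic order d₁ = up, d₂ = right, d₃ = down, d₄ = left. -/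
def prevDir : Dir → Dir
  | .up => .left
  | .right => .up
  | .down => .right
  | .left => .down

def dirVec : Dir → ℤ × ℤ
  | .up => (0, 1)
  | .right => (1, 0)
  | .down => (0, -1)
  | .left => (-1, 0)

/-- The cell to the left of a unit step taken from grid vertex `v` in direction `d`. -/
def leftCell (v : ℤ × ℤ) : Dir → ℤ × ℤ
  | .up => (v.1 - 1, v.2)
  | .right => (v.1, v.2)
  | .down => (v.1, v.2 - 1)
  | .left => (v.1 - 1, v.2 - 1)

/-- The cell to the right of a unit step taken from grid vertex `v` in direction `d`. -/
def rightCell (v : ℤ × ℤ) : Dir → ℤ × ℤ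
  | .up => (v.1, v.2)
  | .right => (v.1, v.2 - 1)
  | .down => (v.1 - 1, v.2 - 1)
  | .left => (v.1 - 1, v.2)

/-- The grid vertex reached from `v₀` after the steps in `L`. -/
def posAt (v₀ : ℤ × ℤ) (L : List Dir) : ℤ × ℤ := v₀ + (L.map dirVec).sum

lemma perim_key (S : Finset (ℤ × ℤ)) (v₀ : ℤ × ℤ) (L A B : List Dir) (e : Dir)
    (hperim : ∀ t : ℕ, ∀ ht : t < L.length,
      rightCell (posAt v₀ (L.take t)) (L.get ⟨t, ht⟩) ∈ S ∧
      leftCell (posAt v₀ (L.take t)) (L.get ⟨t, ht⟩) ∉ S)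
    (hL : L = A ++ e :: B) :
    rightCell (posAt v₀ A) e ∈ S ∧ leftCell (posAt v₀ A) e ∉ S := by
  subst hL
  have ht : A.length < (A ++ e :: B).length := by simp
  have h := hperim A.length ht
  have hg : (A ++ e :: B).get ⟨A.length, ht⟩ = e := by
    simp only [List.get_eq_getElem]
    rw [List.getElem_append_right (Nat.le_refl _)]; simp
  rw [hg, List.take_left] at h
  exact h

lemma posAt_append (v₀ : ℤ × ℤ) (A B : List Dir) :
    posAt v₀ (A ++ B) = posAt v₀ A + (B.map dirVec).sum := by
  simp [posAt, add_assoc]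


/-- If the perimeter word of a connected hole-free shape S (traversed clockwise, with
the cells of S on the right of each step and empty cells on the left) contains a
subword dᵢ dᵢ₋₁⁺ dᵢ₋₂, then S is not orthogonal convex: two of its cells share a row
or column with an empty cell strictly between them. -/
theorem stmt12 (S : Finset (ℤ × ℤ)) (hc : ShapeConnected S)
    (hnohole : ∀ c : ℤ × ℤ, ¬ IsHole S c)
    (v₀ : ℤ × ℤ) (L : List Dir)
    (hperim : ∀ t : ℕ, ∀ ht : t < L.length,
      rightCell (posAt v₀ (L.take t)) (L.get ⟨t, ht⟩) ∈ S ∧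
      leftCell (posAt v₀ (L.take t)) (L.get ⟨t, ht⟩) ∉ S)
    (hclosed : (L.map dirVec).sum = 0)
    (hsub : ∃ (pre post : List Dir) (d : Dir) (m : ℕ), 1 ≤ m ∧
      L = pre ++ [d] ++ List.replicate m (prevDir d) ++ [prevDir (prevDir d)] ++ post) :
    ∃ p ∈ S, ∃ q ∈ S,
      (p.1 = q.1 ∧ ∃ y : ℤ, min p.2 q.2 < y ∧ y < max p.2 q.2 ∧ (p.1, y) ∉ S) ∨
      (p.2 = q.2 ∧ ∃ x : ℤ, min p.1 q.1 < x ∧ x < max p.1 q.1 ∧ (x, p.2) ∉ S) := by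
  obtain ⟨pre, post, d, m, hm, hL⟩ := hsub
  obtain ⟨m', rfl⟩ : ∃ m', m = m' + 1 := ⟨m - 1, (Nat.succ_pred_eq_of_pos hm).symm⟩
  have h0 := perim_key S v₀ L pre
      (List.replicate (m' + 1) (prevDir d) ++ [prevDir (prevDir d)] ++ post) d
      hperim (by rw [hL]; simp)
  have h1 := perim_key S v₀ L (pre ++ [d])
      (List.replicate m' (prevDir d) ++ [prevDir (prevDir d)] ++ post) (prevDir d)
      hperim (by rw [hL]; simp [List.replicate_succ])
  have h2 := perim_key S v₀ L (pre ++ [d] ++ List.replicate (m' + 1) (prevDir d))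
      post (prevDir (prevDir d)) hperim (by rw [hL]; simp)
  set w := posAt v₀ pre with hw
  rw [posAt_append] at h1
  rw [show pre ++ [d] ++ List.replicate (m' + 1) (prevDir d)
        = pre ++ ([d] ++ List.replicate (m' + 1) (prevDir d)) by simp,
      posAt_append] at h2
  rw [← hw] at h1 h2
  have hsum1 : (([d] : List Dir).map dirVec).sum = dirVec d := by simp
  have hsum2 : ((([d] ++ List.replicate (m' + 1) (prevDir d)) : List Dir).map dirVec).sum
      = dirVec d + (m' + 1 : ℕ) • dirVec (prevDir d) := by simp
  rw [hsum1] at h1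
  rw [hsum2] at h2
  have hm' : (0 : ℤ) ≤ (m' : ℤ) := Int.natCast_nonneg _
  cases d <;>
    simp only [prevDir, dirVec, rightCell, leftCell, Prod.smul_mk, smul_eq_mul,
      nsmul_eq_mul, Nat.cast_add, Nat.cast_one, Prod.mk_add_mk, Prod.fst, Prod.snd] at h0 h1 h2 ⊢
  case up =>
    refine ⟨_, h0.1, _, h2.1, Or.inr ⟨by simp +arith <;> omega, w.1 - 1,
      by simp +arith <;> omega, by simp +arith <;> omega,
      by first | simpa using h1.2 | (convert h1.2 using 4 <;> simp [Prod.fst_add, Prod.snd_add] <;> omega)⟩⟩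
  case right =>
    refine ⟨_, h0.1, _, h2.1, Or.inl ⟨by simp +arith <;> omega, w.2,
      by simp +arith <;> omega, by simp +arith <;> omega,
      by first | simpa using h1.2 | (convert h1.2 using 4 <;> simp [Prod.fst_add, Prod.snd_add] <;> omega)⟩⟩
  case down =>
    refine ⟨_, h0.1, _, h2.1, Or.inr ⟨by simp +arith <;> omega, w.1,
      by simp +arith <;> omega, by simp +arith <;> omega,
      by intro hS; apply h1.2; convert hS using 1; ext <;> simp [Prod.fst_add, Prod.snd_add] <;> omega⟩⟩
  case left =>
    refine ⟨_, h0.1, _, h2.1, Or.inl ⟨by simp +arith <;> omega, w.2 - 1,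
      by simp +arith <;> omega, by simp +arith <;> omega,
      by intro hS; apply h1.2; convert hS using 1; ext <;> simp [Prod.fst_add, Prod.snd_add] <;> omega⟩⟩
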